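/- Let M = [a,b) and N = [c,d) be interval modules (0 ≤ a < b, 0 ≤ c < d). Then the interleaving distance D(M,N) = inf{ε > 0 : there exists an ε-interleaving between M and N} equals min{m₁, m₂} = min{ max{|a−c|,|b−d|}, max{(b−a)/2,(d−c)/2} }. -/

import Mathlib

open scoped NNReal

/-- A persistence module: a functor from `[0,∞)` to real vector spaces. -/
structure PM where
  V : ℝ≥0 → Type
  [grp : ∀ x, AddCommGroup (V x)]
  [mod : ∀ x, Module ℝ (V x)]
  map : ∀ {x y : ℝ≥0}, x ≤ y → (V x →ₗ[ℝ] V y)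
  map_id : ∀ x : ℝ≥0, map (le_refl x) = LinearMap.id
  map_comp : ∀ {x y z : ℝ≥0} (h1 : x ≤ y) (h2 : y ≤ z),
    (map h2).comp (map h1) = map (h1.trans h2)

attribute [instance] PM.grp PM.mod

/-- A morphism of persistence modules. -/
structure PM.Hom (M N : PM) where
  app : ∀ x : ℝ≥0, M.V x →ₗ[ℝ] N.V x
  comm : ∀ {x y : ℝ≥0} (h : x ≤ y), (app y).comp (M.map h) = (N.map h).comp (app x)

/-- The shifted module `M·ε`. -/
def PM.shift (M : PM) (ε : ℝ≥0) : PM where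
  V x := M.V (x + ε)
  grp x := inferInstance
  mod x := inferInstance
  map h := M.map (add_le_add_left h ε)
  map_id x := M.map_id (x + ε)
  map_comp h1 h2 := M.map_comp _ _

noncomputable def intervalSub (α β : ℝ) (x : ℝ≥0) : Submodule ℝ ℝ :=
  if α ≤ (x : ℝ) ∧ (x : ℝ) < β then ⊤ else ⊥

/-- The interval module `[α,β)`. -/
noncomputable def intervalModule (α β : ℝ) : PM where
  V x := ↥(intervalSub α β x)
  grp x := inferInstance
  mod x := inferInstance
  map {x y} h := LinearMap.codRestrict _
      ((if α ≤ (x : ℝ) ∧ (y : ℝ) < β then (1 : ℝ) else 0) • (intervalSub α β x).subtype)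
      (by
        intro v
        by_cases hy : α ≤ (y : ℝ) ∧ (y : ℝ) < β
        · simp [intervalSub, hy]
        · have hc : ¬(α ≤ (x : ℝ) ∧ (y : ℝ) < β) := by
            intro hc
            exact hy ⟨le_trans hc.1 (by exact_mod_cast h), hc.2⟩
          rw [if_neg hc, zero_smul, LinearMap.zero_apply]; exact Submodule.zero_mem _)
  map_id x := by
    ext v
    by_cases hx : α ≤ (x : ℝ) ∧ (x : ℝ) < β
    · simp [hx]
    · have hv : (v : ℝ) = 0 := by
        have h2 := v.2
        simp only [intervalSub, if_neg hx, Submodule.mem_bot] at h2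
        exact h2
      simp [hx, hv]
  map_comp {x y z} h1 h2 := by
    ext v
    by_cases hC : α ≤ (x : ℝ) ∧ (z : ℝ) < β
    · have hA : α ≤ (x : ℝ) ∧ (y : ℝ) < β :=
        ⟨hC.1, lt_of_le_of_lt (by exact_mod_cast h2) hC.2⟩
      have hB : α ≤ (y : ℝ) ∧ (z : ℝ) < β :=
        ⟨le_trans hC.1 (by exact_mod_cast h1), hC.2⟩
      simp [hA, hB, hC]
    · rcases not_and_or.mp hC with hx | hz
      · have hA : ¬(α ≤ (x : ℝ) ∧ (y : ℝ) < β) := fun h => hx h.1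
        simp [hA, hC]
        split_ifs <;> simp
      · have hB : ¬(α ≤ (y : ℝ) ∧ (z : ℝ) < β) := fun h => hz h.2
        simp [hB, hC]

/-- `Hom(M,N) ≠ {0}`: there is a nonzero morphism from `M` to `N`. -/
def HomNeZero (M N : PM) : Prop := ∃ F : PM.Hom M N, ∃ x, F.app x ≠ 0

/-- `S_{M,N} = {x ≥ 0 : Hom(M, N·x) ≠ {0}}`. -/
noncomputable def Sset (M N : PM) : Set ℝ :=
  {x : ℝ | 0 ≤ x ∧ HomNeZero M (N.shift x.toNNReal)}

/-- The canonical morphism `Π_M^{M·τ} : M → M·τ`. -/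
def PM.pi (M : PM) (τ : ℝ≥0) : M.Hom (M.shift τ) where
  app x := M.map le_self_add
  comm {x y} h := by
    show (M.map le_self_add).comp (M.map h) =
      (M.map (add_le_add_left h τ)).comp (M.map le_self_add)
    rw [M.map_comp, M.map_comp]

/-- The pair `(Φ, Ψ)` is an `ε`-interleaving between `M` and `N`:
`(Ψ·ε) ∘ Φ = Π_M^{M·2ε}` and `(Φ·ε) ∘ Ψ = Π_N^{N·2ε}` (expressed pointwise). -/
def IsInterleaving (M N : PM) (ε : ℝ≥0)
    (Φ : M.Hom (N.shift ε)) (Ψ : N.Hom (M.shift ε)) : Prop :=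
  (∀ x : ℝ≥0, (Ψ.app (x + ε)).comp (Φ.app x) =
      M.map (le_self_add.trans le_self_add : x ≤ x + ε + ε)) ∧
  (∀ x : ℝ≥0, (Φ.app (x + ε)).comp (Ψ.app x) =
      N.map (le_self_add.trans le_self_add : x ≤ x + ε + ε))

/-! If `ε ≥ max |a - c| |b - d|`, the maps that are the identity of `ℝ` wherever source and target
are both nonzero form an `ε`-interleaving; if `ε ≥ max ((b - a) / 2) ((d - c) / 2)`, the zero maps
do, since every structure map over a bar of length `2ε` vanishes.

Conversely, in an `ε`-interleaving `M(x ≤ x + 2ε)` factors through `N(x + ε)`, so whenever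
`[x, x + 2ε]` lies in `[a, b)` the midpoint `x + ε` lies in `[c, d)`, and symmetrically. If `[a, b)`
is longer than `2ε`, this at `x = a` and at `x = max a (d - ε)` gives `c ≤ a + ε` and `b ≤ d + ε`;
the reverse inequalities come from the symmetric argument, or, when `[c, d)` is at most `2ε` long,
from these two alone. -/

namespace PM

instance (M N : PM) : Zero (M.Hom N) :=
  ⟨⟨fun _ => 0, fun _ => by simp⟩⟩

@[simp]
lemma Hom.zero_app (M N : PM) (x : ℝ≥0) : (0 : M.Hom N).app x = 0 := rfl

end PM

namespace IsInterleaving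

variable {M N : PM} {ε : ℝ≥0} {Φ : M.Hom (N.shift ε)} {Ψ : N.Hom (M.shift ε)}

lemma symm (hI : IsInterleaving M N ε Φ Ψ) : IsInterleaving N M ε Ψ Φ :=
  ⟨hI.2, hI.1⟩

lemma map_eq_zero_of_subsingleton (hI : IsInterleaving M N ε Φ Ψ) (x : ℝ≥0)
    [Subsingleton (N.V (x + ε))] :
    M.map (le_self_add.trans le_self_add : x ≤ x + ε + ε) = 0 := by
  rw [← hI.1 x]
  ext v
  exact (congrArg (Ψ.app (x + ε)) (Subsingleton.elim (α := N.V (x + ε)) (Φ.app x v) 0)).trans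
    (map_zero _)

end IsInterleaving

lemma zero_isInterleaving_iff {M N : PM} {ε : ℝ≥0} :
    IsInterleaving M N ε 0 0 ↔
      (∀ x : ℝ≥0, M.map (le_self_add.trans le_self_add : x ≤ x + ε + ε) = 0) ∧
      (∀ x : ℝ≥0, N.map (le_self_add.trans le_self_add : x ≤ x + ε + ε) = 0) := by
  simp only [IsInterleaving, PM.Hom.zero_app]
  exact and_congr (forall_congr' fun _ => eq_comm) (forall_congr' fun _ => eq_comm)

section IntervalModule

variable {α β : ℝ}

lemma intervalSub_eq_top {x : ℝ≥0} (hx : α ≤ x ∧ x < β) : intervalSub α β x = ⊤ :=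
  if_pos hx

lemma coe_intervalModule_eq_zero {x : ℝ≥0} (hx : ¬(α ≤ x ∧ x < β))
    (v : (intervalModule α β).V x) : Subtype.val v = 0 := by
  simpa [intervalSub, hx] using v.2

lemma intervalModule_subsingleton {x : ℝ≥0} (hx : ¬(α ≤ x ∧ x < β)) :
    Subsingleton ((intervalModule α β).V x) :=
  ⟨fun v w => Subtype.ext <|
    (coe_intervalModule_eq_zero hx v).trans (coe_intervalModule_eq_zero hx w).symm⟩

lemma coe_intervalModule_map {x y : ℝ≥0} (h : x ≤ y) (v : (intervalModule α β).V x) :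
    Subtype.val ((intervalModule α β).map h v) = if α ≤ x ∧ y < β then Subtype.val v else 0 := by
  show (if α ≤ (x : ℝ) ∧ (y : ℝ) < β then (1 : ℝ) else 0) * Subtype.val v = _
  split_ifs <;> simp

lemma intervalModule_map_eq_zero_iff {x y : ℝ≥0} (h : x ≤ y) :
    (intervalModule α β).map h = 0 ↔ ¬(α ≤ x ∧ y < β) := by
  constructor
  · intro h0 hxy
    have hx : α ≤ x ∧ x < β := ⟨hxy.1, lt_of_le_of_lt (NNReal.coe_le_coe.2 h) hxy.2⟩
    let v : (intervalModule α β).V x := ⟨1, by rw [intervalSub_eq_top hx]; trivial⟩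
    have := coe_intervalModule_map h v
    rw [h0, if_pos hxy] at this
    exact zero_ne_one this
  · intro hxy
    exact LinearMap.ext fun v => Subtype.ext ((coe_intervalModule_map h v).trans (if_neg hxy))

lemma intervalModule_map_eq_zero_of_sub_le {ε : ℝ≥0} (hlen : β - α ≤ 2 * ε) (x : ℝ≥0) :
    (intervalModule α β).map (le_self_add.trans le_self_add : x ≤ x + ε + ε) = 0 :=
  (intervalModule_map_eq_zero_iff _).2 fun h => by
    push_cast at h
    linarith [h.1, h.2]

end IntervalModule

namespace IsInterleaving

variable {a b c d : ℝ} {ε : ℝ≥0} {Φ : (intervalModule a b).Hom ((intervalModule c d).shift ε)}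
  {Ψ : (intervalModule c d).Hom ((intervalModule a b).shift ε)}

lemma add_mem_Ico_of_intervalModule
    (hI : IsInterleaving (intervalModule a b) (intervalModule c d) ε Φ Ψ) {x : ℝ} (hx : 0 ≤ x)
    (hax : a ≤ x) (hxb : x + 2 * ε < b) : x + ε ∈ Set.Ico c d := by
  lift x to ℝ≥0 using hx
  by_contra hx
  have := intervalModule_subsingleton (α := c) (β := d) (x := x + ε) (by simpa using hx)
  refine (intervalModule_map_eq_zero_iff _).1 (hI.map_eq_zero_of_subsingleton x) ⟨hax, ?_⟩
  simp only [NNReal.coe_add]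
  linarith

lemma endpoints_le_of_two_mul_lt
    (hI : IsInterleaving (intervalModule a b) (intervalModule c d) ε Φ Ψ) (ha : 0 ≤ a)
    (hε : 2 * ε < b - a) : c ≤ a + ε ∧ b ≤ d + ε := by
  refine ⟨(hI.add_mem_Ico_of_intervalModule ha le_rfl (by linarith)).1, ?_⟩
  by_contra! hdb
  have hx := hI.add_mem_Ico_of_intervalModule (ha.trans (le_max_left a (d - ε)))
    (le_max_left _ _) (by rw [← max_add_add_right]; exact max_lt (by linarith) (by linarith))
  linarith [hx.2, le_max_right a (d - ε)]

lemma abs_sub_le_of_two_mul_lt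
    (hI : IsInterleaving (intervalModule a b) (intervalModule c d) ε Φ Ψ) (ha : 0 ≤ a) (hc : 0 ≤ c)
    (hε : 2 * ε < b - a) : |a - c| ≤ ε ∧ |b - d| ≤ ε := by
  obtain ⟨hca, hbd⟩ := hI.endpoints_le_of_two_mul_lt ha hε
  obtain ⟨hac, hdb⟩ : a ≤ c + ε ∧ d ≤ b + ε := by
    by_cases hε' : 2 * ε < d - c
    · exact hI.symm.endpoints_le_of_two_mul_lt hc hε'
    · constructor <;> linarith
  exact ⟨abs_le.2 ⟨by linarith, by linarith⟩, abs_le.2 ⟨by linarith, by linarith⟩⟩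

lemma intervalModule_min_le
    (hI : IsInterleaving (intervalModule a b) (intervalModule c d) ε Φ Ψ) (ha : 0 ≤ a)
    (hc : 0 ≤ c) : min (max |a - c| |b - d|) (max ((b - a) / 2) ((d - c) / 2)) ≤ ε := by
  rcases le_or_gt (max ((b - a) / 2) ((d - c) / 2)) ε with hε | hε
  · exact (min_le_right _ _).trans hε
  refine (min_le_left _ _).trans ?_
  rcases lt_max_iff.1 hε with hε | hε
  · exact max_le_iff.2 (hI.abs_sub_le_of_two_mul_lt ha hc (by linarith))
  · obtain ⟨hca, hdb⟩ := hI.symm.abs_sub_le_of_two_mul_lt hc ha (by linarith)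
    rw [abs_sub_comm a, abs_sub_comm b]
    exact max_le hca hdb

end IsInterleaving

section IntervalHom

variable (a b c d : ℝ) (ε : ℝ≥0)

noncomputable def intervalHomApp (hc : c ≤ a + ε) (x : ℝ≥0) :
    (intervalModule a b).V x →ₗ[ℝ] (intervalModule c d).V (x + ε) :=
  LinearMap.codRestrict _
    ((if a ≤ (x : ℝ) ∧ (x : ℝ) + ε < d then (1 : ℝ) else 0) • (intervalSub a b x).subtype) (by
      intro v
      split_ifs with hx
      · rw [intervalSub_eq_top (by push_cast; exact ⟨by linarith, hx.2⟩)]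
        trivial
      · rw [zero_smul]
        exact zero_mem _)

variable {a b c d ε}

lemma coe_intervalHomApp (hc : c ≤ a + ε) {x : ℝ≥0} (v : (intervalModule a b).V x) :
    Subtype.val (intervalHomApp a b c d ε hc x v) =
      if a ≤ x ∧ x + ε < d then Subtype.val v else 0 := by
  show (if a ≤ (x : ℝ) ∧ (x : ℝ) + ε < d then (1 : ℝ) else 0) * Subtype.val v = _
  split_ifs <;> simp

noncomputable def intervalHom (hc : c ≤ a + ε) (hd : d ≤ b + ε) :
    (intervalModule a b).Hom ((intervalModule c d).shift ε) where
  app := intervalHomApp a b c d ε hc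
  comm {x y} h := LinearMap.ext fun v => Subtype.ext <| by
    change Subtype.val (intervalHomApp a b c d ε hc y ((intervalModule a b).map h v)) =
      Subtype.val
        ((intervalModule c d).map (add_le_add_left h ε) (intervalHomApp a b c d ε hc x v))
    rw [coe_intervalHomApp, coe_intervalModule_map, coe_intervalModule_map, coe_intervalHomApp]
    by_cases hv : a ≤ x ∧ x < b
    · have hxy := NNReal.coe_le_coe.2 h
      push_cast
      grind
    · simp [coe_intervalModule_eq_zero hv]

lemma intervalHom_app_comp_intervalHom_app (hca : c ≤ a + ε) (hdb : d ≤ b + ε)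
    (hac : a ≤ c + ε) (hbd : b ≤ d + ε) (x : ℝ≥0) :
    ((intervalHom hac hbd).app (x + ε)).comp ((intervalHom hca hdb).app x) =
      (intervalModule a b).map (le_self_add.trans le_self_add : x ≤ x + ε + ε) :=
  LinearMap.ext fun v => Subtype.ext <| by
    change Subtype.val (intervalHomApp c d a b ε hac (x + ε) (intervalHomApp a b c d ε hca x v)) =
      Subtype.val ((intervalModule a b).map _ v)
    rw [coe_intervalHomApp, coe_intervalHomApp, coe_intervalModule_map]
    by_cases hv : a ≤ x ∧ x < b
    · push_cast
      grind
    · simp [coe_intervalModule_eq_zero hv]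

lemma intervalHom_isInterleaving (hca : c ≤ a + ε) (hdb : d ≤ b + ε) (hac : a ≤ c + ε)
    (hbd : b ≤ d + ε) :
    IsInterleaving (intervalModule a b) (intervalModule c d) ε (intervalHom hca hdb)
      (intervalHom hac hbd) :=
  ⟨intervalHom_app_comp_intervalHom_app hca hdb hac hbd,
    intervalHom_app_comp_intervalHom_app hac hbd hca hdb⟩

end IntervalHom

lemma zero_isInterleaving_intervalModule {a b c d : ℝ} {ε : ℝ≥0} (hab : b - a ≤ 2 * ε)
    (hcd : d - c ≤ 2 * ε) : IsInterleaving (intervalModule a b) (intervalModule c d) ε 0 0 :=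
  zero_isInterleaving_iff.2
    ⟨intervalModule_map_eq_zero_of_sub_le hab, intervalModule_map_eq_zero_of_sub_le hcd⟩

lemma exists_isInterleaving_intervalModule_of_min_le {a b c d : ℝ} {ε : ℝ≥0}
    (h : min (max |a - c| |b - d|) (max ((b - a) / 2) ((d - c) / 2)) ≤ ε) :
    ∃ Φ Ψ, IsInterleaving (intervalModule a b) (intervalModule c d) ε Φ Ψ := by
  rcases min_le_iff.1 h with h | h
  · obtain ⟨hac, hbd⟩ := max_le_iff.1 h
    obtain ⟨hac, hca⟩ := abs_le.1 hac
    obtain ⟨hbd, hdb⟩ := abs_le.1 hbd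
    exact ⟨_, _, intervalHom_isInterleaving (by linarith) (by linarith) (by linarith)
      (by linarith)⟩
  · obtain ⟨hab, hcd⟩ := max_le_iff.1 h
    exact ⟨0, 0, zero_isInterleaving_intervalModule (by linarith) (by linarith)⟩

lemma csInf_setOf_pos_and_le {δ : ℝ} (hδ : 0 ≤ δ) : sInf {ε : ℝ | 0 < ε ∧ δ ≤ ε} = δ := by
  rcases hδ.eq_or_lt with rfl | hδ
  · have : {ε : ℝ | 0 < ε ∧ 0 ≤ ε} = Set.Ioi 0 := Set.ext fun ε => ⟨And.left, fun h => ⟨h, h.le⟩⟩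
    rw [this, csInf_Ioi]
  · have : {ε : ℝ | 0 < ε ∧ δ ≤ ε} = Set.Ici δ :=
      Set.ext fun ε => ⟨And.right, fun h => ⟨hδ.trans_le h, h⟩⟩
    rw [this, csInf_Ici]

theorem stmt10_general (a b c d : ℝ) (ha : 0 ≤ a) (hab : a < b) (hc : 0 ≤ c) :
    sInf {ε : ℝ | 0 < ε ∧ ∃ Φ Ψ, IsInterleaving (intervalModule a b) (intervalModule c d) ε.toNNReal Φ Ψ}
      = min (max |a - c| |b - d|) (max ((b - a) / 2) ((d - c) / 2)) := by
  have hδ : 0 ≤ min (max |a - c| |b - d|) (max ((b - a) / 2) ((d - c) / 2)) :=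
    le_min (le_max_of_le_left (abs_nonneg _)) (le_max_of_le_left (by linarith))
  rw [← csInf_setOf_pos_and_le hδ]
  congr 1
  ext ε
  refine and_congr_right fun hε => ?_
  have hε' : (ε.toNNReal : ℝ) = ε := Real.coe_toNNReal ε hε.le
  constructor
  · rintro ⟨_, _, hI⟩
    exact hε' ▸ hI.intervalModule_min_le ha hc
  · exact fun h => exists_isInterleaving_intervalModule_of_min_le (hε'.symm ▸ h)

theorem stmt10 (a b c d : ℝ) (ha : 0 ≤ a) (hab : a < b) (hc : 0 ≤ c) (hcd : c < d) :
    sInf {ε : ℝ | 0 < ε ∧ ∃ Φ Ψ, IsInterleaving (intervalModule a b) (intervalModule c d) ε.toNNReal Φ Ψ}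
      = min (max |a - c| |b - d|) (max ((b - a) / 2) ((d - c) / 2)) :=
  stmt10_general a b c d ha hab hc
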